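/- Let Γ = (V,E,s,r) be a finite quiver without self-loops (s(α) ≠ r(α) for every arrow α), with vertices v₁,…,v_n and arrows α₁,…,α_m, and let (K,f) be a Hilbert representation of Γ. Set H = K_{v₁} ⊕ ⋯ ⊕ K_{v_n} (Hilbert space direct sum), let E_i ⊆ H be the canonical copy of K_{v_i} for i = 1,…,n, and for j = 1,…,m let E_{n+j} ⊆ H be the graph of f_{α_j}, i.e., the set of vectors whose s(α_j)-component is z, whose r(α_j)-component is f_{α_j}(z), and whose other components are 0, for z ∈ K_{s(α_j)}. Then the map (T_v)_{v∈V} ↦ T_{v₁} ⊕ ⋯ ⊕ T_{v_n} is an algebra isomorphism from End(K,f) onto { S ∈ B(H) : S(E_i) ⊆ E_i for all i = 1,…,n+m }. -/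

import Mathlib

set_option synthInstance.maxHeartbeats 1000000
/-- The endomorphism algebra `End(K,f)` of a Hilbert representation `(K,f)` of a quiver
with vertex set `V`, arrow set `E` and source/range maps `s r : E → V`:
the subalgebra of `Π v, B(K v)` of families intertwining all arrow operators. -/
noncomputable def repEnd {V E : Type*} (s r : E → V) (K : V → Type*)
    [∀ v, NormedAddCommGroup (K v)] [∀ v, InnerProductSpace ℂ (K v)]
    (f : ∀ α : E, K (s α) →L[ℂ] K (r α)) :
    Subalgebra ℂ (∀ v, K v →L[ℂ] K v) where
  carrier := {T | ∀ α : E, (T (r α)) ∘L (f α) = (f α) ∘L (T (s α))}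
  mul_mem' := by
    intro T T' hT hT' α
    ext x
    have h1 : T' (r α) (f α x) = f α (T' (s α) x) := DFunLike.congr_fun (hT' α) x
    have h2 : T (r α) (f α (T' (s α) x)) = f α (T (s α) (T' (s α) x)) :=
      DFunLike.congr_fun (hT α) (T' (s α) x)
    simp [ContinuousLinearMap.mul_apply, h1, h2]
  one_mem' := by intro α; ext x; simp
  add_mem' := by
    intro T T' hT hT' α
    ext x
    have h1 : T (r α) (f α x) = f α (T (s α) x) := DFunLike.congr_fun (hT α) x
    have h2 : T' (r α) (f α x) = f α (T' (s α) x) := DFunLike.congr_fun (hT' α) x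
    simp [h1, h2]
  zero_mem' := by intro α; ext x; simp
  algebraMap_mem' := by
    intro c α
    ext x
    simp [Algebra.algebraMap_eq_smul_one]


/-- The endomorphism algebra of a system of subspaces `(H; (E_i)_{i ∈ ι})`:
the subalgebra of `B(H)` of operators leaving every subspace `E i` invariant. -/
noncomputable def invAlg {H : Type*} [NormedAddCommGroup H] [InnerProductSpace ℂ H]
    {ι : Type*} (Esub : ι → Submodule ℂ H) : Subalgebra ℂ (H →L[ℂ] H) where
  carrier := {S | ∀ i : ι, ∀ x ∈ Esub i, S x ∈ Esub i}
  mul_mem' := by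
    intro S S' hS hS' i x hx
    rw [ContinuousLinearMap.mul_apply]
    exact hS i _ (hS' i x hx)
  one_mem' := by intro i x hx; simpa using hx
  add_mem' := by
    intro S S' hS hS' i x hx
    rw [ContinuousLinearMap.add_apply]
    exact (Esub i).add_mem (hS i x hx) (hS' i x hx)
  zero_mem' := by intro i x hx; simp
  algebraMap_mem' := by
    intro c i x hx
    rw [Algebra.algebraMap_eq_smul_one]
    rw [ContinuousLinearMap.smul_apply, ContinuousLinearMap.one_apply]
    exact (Esub i).smul_mem c hx

/-- The subspace of the direct sum `H = ⊕_v K v` corresponding to a vertex `v`: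
vectors supported at `v`. -/
def vertexSub {V : Type*} [Fintype V] (K : V → Type*)
    [∀ v, NormedAddCommGroup (K v)] [∀ v, InnerProductSpace ℂ (K v)] (v : V) :
    Submodule ℂ (PiLp 2 K) where
  carrier := {x | ∀ u : V, u ≠ v → x u = 0}
  add_mem' := by
    intro a b ha hb u hu
    rw [PiLp.add_apply, ha u hu, hb u hu, add_zero]
  zero_mem' := by intro u _; rw [PiLp.zero_apply]
  smul_mem' := by
    intro c a ha u hu
    rw [PiLp.smul_apply, ha u hu, smul_zero]

/-- The subspace of the direct sum `H = ⊕_v K v` corresponding to an arrow `α`: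
the graph of `f α`, i.e. vectors whose `s α`-component is `z`, whose `r α`-component is
`f α z`, and whose other components vanish. -/
def arrowSub {V E : Type*} [Fintype V] (s r : E → V) (K : V → Type*)
    [∀ v, NormedAddCommGroup (K v)] [∀ v, InnerProductSpace ℂ (K v)]
    (f : ∀ α : E, K (s α) →L[ℂ] K (r α)) (α : E) :
    Submodule ℂ (PiLp 2 K) where
  carrier := {x | (∀ u : V, u ≠ s α → u ≠ r α → x u = 0) ∧ x (r α) = f α (x (s α))}
  add_mem' := by
    intro a b ha hb
    refine ⟨fun u h1 h2 => ?_, ?_⟩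
    · rw [PiLp.add_apply, ha.1 u h1 h2, hb.1 u h1 h2, add_zero]
    · rw [PiLp.add_apply, PiLp.add_apply, ha.2, hb.2, map_add]
  zero_mem' := by
    refine ⟨fun u _ _ => ?_, ?_⟩
    · rw [PiLp.zero_apply]
    · rw [PiLp.zero_apply, PiLp.zero_apply, map_zero]
  smul_mem' := by
    intro c a ha
    refine ⟨fun u h1 h2 => ?_, ?_⟩
    · rw [PiLp.smul_apply, ha.1 u h1 h2, smul_zero]
    · rw [PiLp.smul_apply, PiLp.smul_apply, ha.2, map_smul]

/-!
Invariance of the vertex subspaces forces an operator on `⊕ᵥ K v` to be block diagonal,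
`S = ⊕ᵥ T v`. A block diagonal operator maps the graph of `f α` into itself exactly when
`T (r α) ∘ f α = f α ∘ T (s α)`: test it on `(z, f α z)`, whose two components lie in different
summands because `s α ≠ r α`. Hence `T ↦ ⊕ᵥ T v`, which is injective, maps `End(K,f)` onto the
algebra of operators leaving all `n + m` subspaces invariant.
-/

open scoped ENNReal

namespace PiLp

variable {𝕜 : Type*} [NormedField 𝕜] (p : ℝ≥0∞) {V : Type*}
  {K : V → Type*} [∀ v, NormedAddCommGroup (K v)] [∀ v, NormedSpace 𝕜 (K v)]

noncomputable def diagBlock [DecidableEq V] (S : PiLp p K →L[𝕜] PiLp p K) (v : V) :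
    K v →L[𝕜] K v :=
  proj p K v ∘L S ∘L (continuousLinearEquiv p 𝕜 K).symm.toContinuousLinearMap ∘L
    ContinuousLinearMap.single 𝕜 K v

lemma diagBlock_apply [DecidableEq V] (S : PiLp p K →L[𝕜] PiLp p K) (v : V) (z : K v) :
    diagBlock p S v z = S (single p v z) v := rfl

variable [Fact (1 ≤ p)] [Fintype V]

noncomputable def diagAlgHom : (∀ v, K v →L[𝕜] K v) →ₐ[𝕜] (PiLp p K →L[𝕜] PiLp p K) where
  toFun T := (continuousLinearEquiv p 𝕜 K).symm.toContinuousLinearMap ∘L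
    ContinuousLinearMap.piMap T ∘L (continuousLinearEquiv p 𝕜 K).toContinuousLinearMap
  map_one' := rfl
  map_mul' _ _ := rfl
  map_zero' := rfl
  map_add' _ _ := rfl
  commutes' _ := rfl

@[simp]
lemma diagAlgHom_apply_apply (T : ∀ v, K v →L[𝕜] K v) (x : PiLp p K) (v : V) :
    diagAlgHom p T x v = T v (x v) := rfl

lemma diagBlock_diagAlgHom [DecidableEq V] (T : ∀ v, K v →L[𝕜] K v) :
    diagBlock p (diagAlgHom p T) = T := by
  ext v z
  simp [diagBlock_apply]

lemma diagAlgHom_injective : Function.Injective (diagAlgHom p : (∀ v, K v →L[𝕜] K v) → _) := by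
  classical
  exact Function.LeftInverse.injective (diagBlock_diagAlgHom p)

lemma diagAlgHom_diagBlock [DecidableEq V] {S : PiLp p K →L[𝕜] PiLp p K}
    (hS : ∀ v (z : K v) u, u ≠ v → S (single p v z) u = 0) :
    diagAlgHom p (diagBlock p S) = S := by
  let e : (∀ v, K v) →ₗ[𝕜] PiLp p K := (continuousLinearEquiv p 𝕜 K).symm.toLinearEquiv
  suffices h : (diagAlgHom p (diagBlock p S) : PiLp p K →ₗ[𝕜] PiLp p K) ∘ₗ e =
      (S : PiLp p K →ₗ[𝕜] PiLp p K) ∘ₗ e by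
    refine ContinuousLinearMap.ext fun x => ?_
    simpa [e] using LinearMap.congr_fun h (WithLp.ofLp x)
  refine LinearMap.pi_ext fun v z => PiLp.ext fun u => ?_
  change diagBlock p S u (single p v z u) = S (single p v z) u
  rcases eq_or_ne u v with rfl | huv
  · rw [single_eq_same, diagBlock_apply]
  · rw [single_eq_of_ne p huv, map_zero, hS v z u huv]

end PiLp

lemma mem_invAlg_sumElim_iff {H : Type*} [NormedAddCommGroup H] [InnerProductSpace ℂ H]
    {ι κ : Type*} (A : ι → Submodule ℂ H) (B : κ → Submodule ℂ H) (S : H →L[ℂ] H) :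
    S ∈ invAlg (Sum.elim A B) ↔ S ∈ invAlg A ∧ S ∈ invAlg B :=
  Sum.forall

section Quiver

variable {V : Type*} [Fintype V] {K : V → Type*}
  [∀ v, NormedAddCommGroup (K v)] [∀ v, InnerProductSpace ℂ (K v)]

lemma invAlg_vertexSub : invAlg (vertexSub K) = (PiLp.diagAlgHom 2).range := by
  classical
  ext S
  constructor
  · intro hS
    refine ⟨PiLp.diagBlock 2 S, PiLp.diagAlgHom_diagBlock 2 fun v z u huv => ?_⟩
    exact hS v _ (fun u hu => PiLp.single_eq_of_ne 2 hu z) u huv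
  · rintro ⟨T, rfl⟩ v x hx u huv
    simp [hx u huv]

lemma diagAlgHom_mem_invAlg_arrowSub_iff {E : Type*} {s r : E → V}
    (hloop : ∀ α, s α ≠ r α) (f : ∀ α : E, K (s α) →L[ℂ] K (r α))
    (T : ∀ v, K v →L[ℂ] K v) :
    PiLp.diagAlgHom 2 T ∈ invAlg (arrowSub s r K f) ↔ T ∈ repEnd s r K f := by
  classical
  constructor
  · intro hT α
    ext z
    have hgraph :
        PiLp.single 2 (s α) z + PiLp.single 2 (r α) (f α z) ∈ arrowSub s r K f α :=
      ⟨fun u hs hr => by simp [hs, hr], by simp [hloop α, (hloop α).symm]⟩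
    simpa [hloop α, (hloop α).symm] using (hT α _ hgraph).2
  · rintro hT α x ⟨hx0, hxf⟩
    refine ⟨fun u hs hr => ?_, ?_⟩
    · simp [hx0 u hs hr]
    · simpa [hxf] using DFunLike.congr_fun (hT α) (x (s α))

lemma map_diagAlgHom_repEnd {E : Type*} {s r : E → V} (hloop : ∀ α, s α ≠ r α)
    (f : ∀ α : E, K (s α) →L[ℂ] K (r α)) :
    (repEnd s r K f).map (PiLp.diagAlgHom 2) =
      invAlg (Sum.elim (vertexSub K) (arrowSub s r K f)) := by
  ext S
  rw [mem_invAlg_sumElim_iff, invAlg_vertexSub]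
  constructor
  · rintro ⟨T, hT, rfl⟩
    exact ⟨⟨T, rfl⟩, (diagAlgHom_mem_invAlg_arrowSub_iff hloop f T).2 hT⟩
  · rintro ⟨⟨T, rfl⟩, hT⟩
    exact ⟨T, (diagAlgHom_mem_invAlg_arrowSub_iff hloop f T).1 hT, rfl⟩

end Quiver

theorem stmt_17_general {V E : Type*} [Fintype V] (s r : E → V)
    (hloop : ∀ α : E, s α ≠ r α)
    (K : V → Type*) [∀ v, NormedAddCommGroup (K v)] [∀ v, InnerProductSpace ℂ (K v)]
    (f : ∀ α : E, K (s α) →L[ℂ] K (r α)) :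
    ∃ Φ : repEnd s r K f ≃ₐ[ℂ]
        invAlg (Sum.elim (fun v : V => vertexSub K v) (fun α : E => arrowSub s r K f α)),
      ∀ (T : repEnd s r K f) (x : PiLp 2 K) (v : V),
        ((Φ T : PiLp 2 K →L[ℂ] PiLp 2 K) x) v = (T : ∀ v, K v →L[ℂ] K v) v (x v) :=
  ⟨((repEnd s r K f).equivMapOfInjective _ (PiLp.diagAlgHom_injective 2)).trans
      (Subalgebra.equivOfEq _ _ (map_diagAlgHom_repEnd hloop f)), fun _ _ _ => rfl⟩

/-- **Reduction of Hilbert representations of quivers without self-loops to systems of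
subspaces.**  For a finite quiver `Γ` without self-loops, with `n` vertices and `m`
arrows, and a Hilbert representation `(K,f)`, form `H = ⊕_v K v` with the `n + m`
subspaces given by the canonical copies of the `K v` and the graphs of the `f α`.  Then
`(T_v)_v ↦ ⊕_v T_v` is an algebra isomorphism from `End(K,f)` onto the algebra of
bounded operators on `H` leaving all `n + m` subspaces invariant. -/
theorem stmt_17 {V E : Type*} [Fintype V] [Fintype E] (s r : E → V)
    (hloop : ∀ α : E, s α ≠ r α)
    (K : V → Type*) [∀ v, NormedAddCommGroup (K v)] [∀ v, InnerProductSpace ℂ (K v)]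
    [∀ v, CompleteSpace (K v)]
    (f : ∀ α : E, K (s α) →L[ℂ] K (r α)) :
    ∃ Φ : repEnd s r K f ≃ₐ[ℂ]
        invAlg (Sum.elim (fun v : V => vertexSub K v) (fun α : E => arrowSub s r K f α)),
      ∀ (T : repEnd s r K f) (x : PiLp 2 K) (v : V),
        ((Φ T : PiLp 2 K →L[ℂ] PiLp 2 K) x) v = (T : ∀ v, K v →L[ℂ] K v) v (x v) :=
  stmt_17_general s r hloop K f
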